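/- The empirical quantile is strongly consistent: for every a ∈ (0,1), the sample quantile \hat G_n^{-1}(a) = X_{(⌈na⌉)} converges almost surely to G^{-1}(a) as n → ∞. -/

import Mathlib

open MeasureTheory ProbabilityTheory Filter Set
open scoped Classical

noncomputable section

/-- The cumulative distribution function of a probability measure `μ` on `ℝ`:
`G(x) = μ((-∞, x])`. -/
def popCDF (μ : Measure ℝ) (x : ℝ) : ℝ := (μ (Iic x)).toReal

/-- The quantile function `G⁻¹(a) = inf {x : a ≤ G(x)}`. -/
def popQuantile (μ : Measure ℝ) (a : ℝ) : ℝ := sInf {x : ℝ | a ≤ popCDF μ x}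

/-- Upper quantile `η^u = G⁻¹(1 - α)`. -/
def etaU (μ : Measure ℝ) (α : ℝ) : ℝ := popQuantile μ (1 - α)

/-- Lower quantile `η^l = G⁻¹(α)`. -/
def etaL (μ : Measure ℝ) (α : ℝ) : ℝ := popQuantile μ α

/-- Conditional CDF of `X - η^u` given `X > η^u`, evaluated at `t`. -/
def tailCDFU (μ : Measure ℝ) (α t : ℝ) : ℝ :=
  (μ (Ioc (etaU μ α) (etaU μ α + t))).toReal / (μ (Ioi (etaU μ α))).toReal

/-- Conditional CDF of `η^l - X` given `X < η^l`, evaluated at `t`. -/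
def tailCDFL (μ : Measure ℝ) (α t : ℝ) : ℝ :=
  (μ (Ico (etaL μ α - t) (etaL μ α))).toReal / (μ (Iio (etaL μ α))).toReal

/-- `s^u`: the median of the conditional distribution of `X - η^u` given `X > η^u`. -/
def sU (μ : Measure ℝ) (α : ℝ) : ℝ := sInf {t : ℝ | 1 / 2 ≤ tailCDFU μ α t}

/-- `s^l`: the median of the conditional distribution of `η^l - X` given `X < η^l`. -/
def sL (μ : Measure ℝ) (α : ℝ) : ℝ := sInf {t : ℝ | 1 / 2 ≤ tailCDFL μ α t}

/-- Scaled upper tail distribution `F^u(t) = P((X - η^u)/s^u ≤ t | X > η^u)`. -/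
def FU (μ : Measure ℝ) (α t : ℝ) : ℝ := tailCDFU μ α (sU μ α * t)

/-- Scaled lower tail distribution `F^l(t) = P((η^l - X)/s^l ≤ t | X < η^l)`. -/
def FL (μ : Measure ℝ) (α t : ℝ) : ℝ := tailCDFL μ α (sL μ α * t)

/-- The reference distribution `F₀(t) = 1 - exp(-log 2 · t)`. -/
def F0 (t : ℝ) : ℝ := 1 - Real.exp (-Real.log 2 * t)

/-- The threshold `t₀ = 1 / log 2`. -/
def t0 : ℝ := 1 / Real.log 2

/-- The multiset of the first `n` observations of the process `X` at outcome `ω`. -/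
def sample {Ω : Type*} (X : ℕ → Ω → ℝ) (n : ℕ) (ω : Ω) : Multiset ℝ :=
  (Finset.range n).val.map fun i => X i ω

/-- The `k`-th order statistic (1-indexed) of a finite multiset of reals. -/
def orderStat (s : Multiset ℝ) (k : ℕ) : ℝ := (s.sort (· ≤ ·)).getD (k - 1) 0

/-- The sample median of a finite multiset of `m` reals: its `⌈m/2⌉`-th order statistic. -/
def sampleMedian (s : Multiset ℝ) : ℝ := orderStat s (Nat.ceil ((s.card : ℝ) / 2))

/-- The sample upper quantile `η̂^u_n = X_(⌈n(1-α)⌉)`. -/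
def etaUn {Ω : Type*} (X : ℕ → Ω → ℝ) (α : ℝ) (n : ℕ) (ω : Ω) : ℝ :=
  orderStat (sample X n ω) (Nat.ceil ((n : ℝ) * (1 - α)))

/-- The sample lower quantile `η̂^l_n = X_(⌈nα⌉)`. -/
def etaLn {Ω : Type*} (X : ℕ → Ω → ℝ) (α : ℝ) (n : ℕ) (ω : Ω) : ℝ :=
  orderStat (sample X n ω) (Nat.ceil ((n : ℝ) * α))

/-- The sample upper tail scale `ŝ^u_n = med{X_i - η̂^u_n : X_i > η̂^u_n}`. -/
def sUn {Ω : Type*} (X : ℕ → Ω → ℝ) (α : ℝ) (n : ℕ) (ω : Ω) : ℝ :=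
  sampleMedian (((sample X n ω).filter fun x => etaUn X α n ω < x).map
    fun x => x - etaUn X α n ω)

/-- The sample lower tail scale `ŝ^l_n = med{η̂^l_n - X_i : X_i < η̂^l_n}`. -/
def sLn {Ω : Type*} (X : ℕ → Ω → ℝ) (α : ℝ) (n : ℕ) (ω : Ω) : ℝ :=
  sampleMedian (((sample X n ω).filter fun x => x < etaLn X α n ω).map
    fun x => etaLn X α n ω - x)

/-- Empirical scaled upper tail CDF
`F̂^u_n(t) = #{i ≤ n : 0 < (X_i - η̂^u_n)/ŝ^u_n ≤ t} / #{i ≤ n : X_i > η̂^u_n}`. -/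
def FUn {Ω : Type*} (X : ℕ → Ω → ℝ) (α : ℝ) (n : ℕ) (ω : Ω) (t : ℝ) : ℝ :=
  (((sample X n ω).filter fun x =>
      0 < (x - etaUn X α n ω) / sUn X α n ω ∧ (x - etaUn X α n ω) / sUn X α n ω ≤ t).card : ℝ) /
    (((sample X n ω).filter fun x => etaUn X α n ω < x).card : ℝ)

/-- Empirical scaled lower tail CDF
`F̂^l_n(t) = #{i ≤ n : 0 < (η̂^l_n - X_i)/ŝ^l_n ≤ t} / #{i ≤ n : X_i < η̂^l_n}`. -/
def FLn {Ω : Type*} (X : ℕ → Ω → ℝ) (α : ℝ) (n : ℕ) (ω : Ω) (t : ℝ) : ℝ :=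
  (((sample X n ω).filter fun x =>
      0 < (etaLn X α n ω - x) / sLn X α n ω ∧ (etaLn X α n ω - x) / sLn X α n ω ≤ t).card : ℝ) /
    (((sample X n ω).filter fun x => x < etaLn X α n ω).card : ℝ)

/-- Proportion of flagged upper tail outliers `d̂^u_n = sup_{t ≥ t₀} {F₀(t) - F̂^u_n(t)}⁺`. -/
def dUn {Ω : Type*} (X : ℕ → Ω → ℝ) (α : ℝ) (n : ℕ) (ω : Ω) : ℝ :=
  ⨆ t : Ici t0, max 0 (F0 t - FUn X α n ω t)

/-- Proportion of flagged lower tail outliers `d̂^l_n = sup_{t ≥ t₀} {F₀(t) - F̂^l_n(t)}⁺`. -/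
def dLn {Ω : Type*} (X : ℕ → Ω → ℝ) (α : ℝ) (n : ℕ) (ω : Ω) : ℝ :=
  ⨆ t : Ici t0, max 0 (F0 t - FLn X α n ω t)

/-- Upper filtering threshold `t̂^u_n = min{t : F̂^u_n(t) ≥ 1 - d̂^u_n}`. -/
def tUn {Ω : Type*} (X : ℕ → Ω → ℝ) (α : ℝ) (n : ℕ) (ω : Ω) : ℝ :=
  sInf {t : ℝ | 1 - dUn X α n ω ≤ FUn X α n ω t}

/-- Lower filtering threshold `t̂^l_n = min{t : F̂^l_n(t) ≥ 1 - d̂^l_n}`. -/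
def tLn {Ω : Type*} (X : ℕ → Ω → ℝ) (α : ℝ) (n : ℕ) (ω : Ω) : ℝ :=
  sInf {t : ℝ | 1 - dLn X α n ω ≤ FLn X α n ω t}

/-- The filter flags observation `X_i` (among the first `n`) when
`X_i > η̂^u_n + ŝ^u_n t̂^u_n` or `X_i < η̂^l_n - ŝ^l_n t̂^l_n`. -/
def flagged {Ω : Type*} (X : ℕ → Ω → ℝ) (α : ℝ) (n i : ℕ) (ω : Ω) : Prop :=
  X i ω > etaUn X α n ω + sUn X α n ω * tUn X α n ω ∨
    X i ω < etaLn X α n ω - sLn X α n ω * tLn X α n ω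

end

/-!
The order statistic `X_(⌈na⌉)` is the generalised inverse of the empirical CDF `G_n` of the first
`n` observations: `X_(⌈na⌉) ≤ c ↔ a ≤ G_n(c)`. By the strong law of large numbers, almost surely
`G_n(c) → G(c)` simultaneously for all rational `c`. Continuity of `G` gives `G(G⁻¹(a)) = a`, and
strict monotonicity then gives `G(c) < a < G(c')` for rationals `c < G⁻¹(a) < c'`, so eventually
`c < X_(⌈na⌉) ≤ c'`.
-/

open scoped Topology

noncomputable def empiricalCDF (s : Multiset ℝ) (c : ℝ) : ℝ :=
  (Multiset.card (s.filter (· ≤ c)) : ℝ) / Multiset.card s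

theorem List.Pairwise.getElem_le_iff_lt_countP {α : Type*} [LinearOrder α] {l : List α}
    (hl : l.Pairwise (· ≤ ·)) (c : α) {j : ℕ} (hj : j < l.length) :
    l[j] ≤ c ↔ j < l.countP (· ≤ c) := by
  induction l generalizing j with
  | nil => simp at hj
  | cons a l ih =>
    rw [List.pairwise_cons] at hl
    by_cases hac : a ≤ c
    · rw [List.countP_cons_of_pos (by simpa using hac)]
      cases j with
      | zero => simpa using hac
      | succ j => simpa using ih hl.2 (by simpa using hj)
    · have hgt : ∀ b ∈ a :: l, c < b := by
        simp only [List.mem_cons, forall_eq_or_imp]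
        exact ⟨not_le.1 hac, fun b hb => (not_le.1 hac).trans_le (hl.1 b hb)⟩
      rw [List.countP_eq_zero.2 fun b hb => by simpa using hgt b hb]
      simpa using hgt _ (List.getElem_mem hj)

theorem orderStat_le_iff {s : Multiset ℝ} {k : ℕ} (hk₀ : 1 ≤ k) (hk : k ≤ Multiset.card s)
    (c : ℝ) : orderStat s k ≤ c ↔ k ≤ Multiset.card (s.filter (· ≤ c)) := by
  have hlen : k - 1 < (s.sort (· ≤ ·)).length := by rw [Multiset.length_sort]; omega
  have hcount : (s.sort (· ≤ ·)).countP (· ≤ c) = Multiset.card (s.filter (· ≤ c)) := by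
    rw [← Multiset.countP_eq_card_filter, ← Multiset.coe_countP, Multiset.sort_eq]
  rw [orderStat, List.getD_eq_getElem _ _ hlen,
    (Multiset.pairwise_sort s _).getElem_le_iff_lt_countP c hlen, hcount]
  omega

theorem orderStat_ceil_mul_le_iff {s : Multiset ℝ} (hs : s ≠ 0) {a : ℝ} (ha : a ∈ Ioc 0 1)
    (c : ℝ) : orderStat s ⌈Multiset.card s * a⌉₊ ≤ c ↔ a ≤ empiricalCDF s c := by
  have hn : (0 : ℝ) < Multiset.card s := by exact_mod_cast Multiset.card_pos.2 hs
  have hk₀ : 1 ≤ ⌈Multiset.card s * a⌉₊ := Nat.one_le_ceil_iff.2 (mul_pos hn ha.1)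
  have hk : ⌈Multiset.card s * a⌉₊ ≤ Multiset.card s :=
    Nat.ceil_le.2 (mul_le_of_le_one_right hn.le ha.2)
  rw [orderStat_le_iff hk₀ hk, Nat.ceil_le, empiricalCDF, le_div_iff₀ hn, mul_comm]

theorem tendsto_orderStat_ceil_mul {s : ℕ → Multiset ℝ} (hcard : ∀ n, Multiset.card (s n) = n)
    {G : ℝ → ℝ} (hG : StrictMono G) {a q : ℝ} (ha : a ∈ Ioc 0 1) (hq : G q = a)
    (hconv : ∀ c : ℚ, Tendsto (fun n => empiricalCDF (s n) c) atTop (𝓝 (G c))) :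
    Tendsto (fun n : ℕ => orderStat (s n) ⌈(n : ℝ) * a⌉₊) atTop (𝓝 q) := by
  have hle_iff : ∀ c : ℝ, ∀ᶠ n : ℕ in atTop,
      (orderStat (s n) ⌈(n : ℝ) * a⌉₊ ≤ c ↔ a ≤ empiricalCDF (s n) c) := by
    intro c
    filter_upwards [eventually_ge_atTop 1] with n hn
    have hs : s n ≠ 0 := by rw [← Multiset.card_pos, hcard]; exact hn
    simpa only [hcard] using orderStat_ceil_mul_le_iff hs ha c
  refine tendsto_order.2 ⟨fun b hb => ?_, fun b hb => ?_⟩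
  · obtain ⟨c, hbc, hcq⟩ := exists_rat_btwn hb
    have hGc : G c < a := hq ▸ hG hcq
    filter_upwards [hle_iff c, (hconv c).eventually (eventually_lt_nhds hGc)] with n hn hlt
    exact hbc.trans (not_le.1 fun h => (hn.1 h).not_gt hlt)
  · obtain ⟨c, hqc, hcb⟩ := exists_rat_btwn hb
    have hGc : a < G c := hq ▸ hG hqc
    filter_upwards [hle_iff c, (hconv c).eventually (eventually_gt_nhds hGc)] with n hn hgt
    exact (hn.2 hgt.le).trans_lt hcb

@[simp]
theorem card_sample {Ω : Type*} (X : ℕ → Ω → ℝ) (n : ℕ) (ω : Ω) :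
    Multiset.card (sample X n ω) = n := by
  simp [sample]

theorem empiricalCDF_sample {Ω : Type*} (X : ℕ → Ω → ℝ) (n : ℕ) (ω : Ω) (c : ℝ) :
    empiricalCDF (sample X n ω) c = (∑ i ∈ Finset.range n, (Iic c).indicator 1 (X i ω)) / n := by
  rw [empiricalCDF, card_sample]
  simp only [sample, Multiset.filter_map, Multiset.card_map, indicator_apply, mem_Iic,
    Pi.one_apply, Finset.sum_boole]
  rfl

theorem ae_tendsto_empiricalCDF_sample {Ω : Type*} [MeasurableSpace Ω] {P : Measure Ω}
    {μ : Measure ℝ} [IsFiniteMeasure μ] {X : ℕ → Ω → ℝ} (hXmeas : ∀ i, Measurable (X i))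
    (hindep : Pairwise fun i j => X i ⟂ᵢ[P] X j) (hident : ∀ i, P.map (X i) = μ) (c : ℝ) :
    ∀ᵐ ω ∂P, Tendsto (fun n => empiricalCDF (sample X n ω) c) atTop (𝓝 (popCDF μ c)) := by
  set f : ℝ → ℝ := (Iic c).indicator 1
  have hf : Measurable f := measurable_one.indicator measurableSet_Iic
  have hmean : P[f ∘ X 0] = popCDF μ c := by
    rw [Function.comp_def, ← integral_map (hXmeas 0).aemeasurable hf.aestronglyMeasurable, hident 0,
      integral_indicator_one measurableSet_Iic, popCDF, measureReal_def]
  have hint : Integrable (f ∘ X 0) P := by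
    rw [← integrable_map_measure hf.aestronglyMeasurable (hXmeas 0).aemeasurable, hident 0]
    exact (integrable_const 1).indicator measurableSet_Iic
  have hident' : ∀ i, IdentDistrib (f ∘ X i) (f ∘ X 0) P P := fun i =>
    (IdentDistrib.mk (hXmeas i).aemeasurable (hXmeas 0).aemeasurable
      (by rw [hident i, hident 0])).comp hf
  have hslln := strong_law_ae_real (fun i => f ∘ X i) hint
    (fun i j hij => (hindep hij).comp hf hf) hident'
  rw [hmean] at hslln
  simp only [empiricalCDF_sample]
  exact hslln

theorem apply_csInf_setOf_le_apply {F : ℝ → ℝ} (hF : Continuous F) (hmono : Monotone F) {a : ℝ}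
    (hlo : ∃ y, F y < a) (hhi : ∃ x, a ≤ F x) : F (sInf {x | a ≤ F x}) = a := by
  obtain ⟨y, hy⟩ := hlo
  have hbdd : BddBelow {x | a ≤ F x} :=
    ⟨y, fun x hx => le_of_not_gt fun hxy => (hy.trans_le hx).not_ge (hmono hxy.le)⟩
  have hmem : sInf {x | a ≤ F x} ∈ {x | a ≤ F x} :=
    (isClosed_le continuous_const hF).csInf_mem hhi hbdd
  refine le_antisymm ?_ hmem
  refine le_of_tendsto (hF.continuousWithinAt (s := Iio (sInf {x | a ≤ F x}))).tendsto ?_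
  filter_upwards [self_mem_nhdsWithin] with x hx
  exact (not_le.1 fun h => notMem_of_lt_csInf hx hbdd h).le

theorem popCDF_popQuantile {μ : Measure ℝ} [IsProbabilityMeasure μ] (hG : Continuous (popCDF μ))
    {a : ℝ} (ha : a ∈ Ioo 0 1) : popCDF μ (popQuantile μ a) = a := by
  have hcdf : popCDF μ = cdf μ := funext fun x => by rw [popCDF, cdf_eq_real, measureReal_def]
  rw [hcdf] at hG
  rw [popQuantile, hcdf]
  exact apply_csInf_setOf_le_apply hG (cdf μ).mono
    ((tendsto_cdf_atBot μ).eventually (eventually_lt_nhds ha.1)).exists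
    ((tendsto_cdf_atTop μ).eventually (eventually_ge_nhds ha.2)).exists

theorem empirical_quantile_consistency_general
    {Ω : Type*} [MeasurableSpace Ω] (P : Measure Ω)
    (μ : Measure ℝ) [IsProbabilityMeasure μ]
    (hGcont : Continuous (popCDF μ)) (hGmono : StrictMono (popCDF μ))
    (X : ℕ → Ω → ℝ) (hXmeas : ∀ i, Measurable (X i))
    (hindep : iIndepFun X P)
    (hident : ∀ i, Measure.map (X i) P = μ) :
    ∀ a ∈ Ioo (0 : ℝ) 1,
      ∀ᵐ ω ∂P,
        Tendsto (fun n => orderStat (sample X n ω) (Nat.ceil ((n : ℝ) * a))) atTop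
          (nhds (popQuantile μ a)) := by
  intro a ha
  have hconv : ∀ᵐ ω ∂P, ∀ c : ℚ,
      Tendsto (fun n => empiricalCDF (sample X n ω) c) atTop (𝓝 (popCDF μ c)) :=
    ae_all_iff.2 fun c =>
      ae_tendsto_empiricalCDF_sample hXmeas (fun _ _ hij => hindep.indepFun hij) hident c
  filter_upwards [hconv] with ω hω
  exact tendsto_orderStat_ceil_mul (card_sample X · ω) hGmono (Ioo_subset_Ioc_self ha)
    (popCDF_popQuantile hGcont ha) hω

/-- **Strong consistency of the empirical quantile.**
For an i.i.d. sample from a continuous, strictly increasing distribution `G`, for every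
`a ∈ (0,1)` the sample quantile `Ĝ_n⁻¹(a) = X_(⌈na⌉)` converges almost surely
to `G⁻¹(a)` as `n → ∞`. -/
theorem empirical_quantile_consistency
    {Ω : Type*} [MeasurableSpace Ω] (P : Measure Ω) [IsProbabilityMeasure P]
    (μ : Measure ℝ) [IsProbabilityMeasure μ]
    (hGcont : Continuous (popCDF μ)) (hGmono : StrictMono (popCDF μ))
    (X : ℕ → Ω → ℝ) (hXmeas : ∀ i, Measurable (X i))
    (hindep : iIndepFun X P)
    (hident : ∀ i, Measure.map (X i) P = μ) :
    ∀ a ∈ Ioo (0 : ℝ) 1,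
      ∀ᵐ ω ∂P,
        Tendsto (fun n => orderStat (sample X n ω) (Nat.ceil ((n : ℝ) * a))) atTop
          (nhds (popQuantile μ a)) :=
  empirical_quantile_consistency_general P μ hGcont hGmono X hXmeas hindep hident
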